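/- arXiv:1901.03152 — 2 statements merged into one kernel-verified Lean document; each statement's English description precedes it below -/
import Mathlib

section
/- Let G₁ and G₂ be arbitrary groups and H ≤ G₁ × G₂ a subgroup. Then there exist a set I, binary relational systems S₁ and S₂ over I, and a morphism of I-systems φ : S₁ → S₂ such that Aut_I(S₁) ≅ G₁, Aut_I(S₂) ≅ G₂ and Aut_I(φ) ≅ H. -/
/-!
Every system below has, for each label `i`, the graph of a map `f i` as its relation, so its
automorphisms are the permutations commuting with all the maps, and a morphism is a map
intertwining them.

On `V₁ = G₁` the maps are the right multiplications, whose centraliser is the left-regular copy of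
`G₁`. On `V₂ = G₂ ⊕ (G₁ × G₂) ⧸ H` the maps are the right multiplications of `G₂` on the first
summand, the link `y ↦ (1, y)H` (whose fixed points are exactly the cosets), and the action of
`G₁ × 1` on the cosets. Every vertex is reached from `inl 1` along these maps, so an automorphism is
determined by the image `inl b` of `inl 1`: it is the left action of `b`, through `(1, b)` on the
cosets. With `φ v = (v⁻¹, 1)H`, the left actions of `a` on `V₁` and of `b` on `V₂` commute with `φ`
iff `(v⁻¹ a⁻¹, 1)H = (v⁻¹, b)H` for all `v`, i.e. iff `(a, b) ∈ H`.
-/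

/-- The automorphism group of a binary relational system `R` over a label set `I`,
as a subgroup of the permutations of the vertex set. -/
def relAut {I V : Type*} (R : I → V → V → Prop) : Subgroup (Equiv.Perm V) where
  carrier := {e | ∀ i v w, R i v w ↔ R i (e v) (e w)}
  one_mem' := by intro i v w; simp
  mul_mem' := by
    intro a b ha hb i v w
    simpa [Equiv.Perm.mul_apply] using (hb i v w).trans (ha i (b v) (b w))
  inv_mem' := by
    intro a ha i v w
    simpa [Equiv.Perm.coe_inv, Equiv.apply_symm_apply] using (ha i (a⁻¹ v) (a⁻¹ w)).symm

/-- The automorphism group of a morphism of binary relational systems, i.e. the subgroup of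
`Aut(R₁) × Aut(R₂)` of pairs commuting with `f`. -/
def relArrowAut {I V₁ V₂ : Type*} (R₁ : I → V₁ → V₁ → Prop) (R₂ : I → V₂ → V₂ → Prop)
    (f : V₁ → V₂) : Subgroup (relAut R₁ × relAut R₂) where
  carrier := {p | ∀ v, f ((p.1 : Equiv.Perm V₁) v) = (p.2 : Equiv.Perm V₂) (f v)}
  one_mem' := by intro v; simp
  mul_mem' := by
    intro a b ha hb v
    simp only [Prod.fst_mul, Prod.snd_mul, Subgroup.coe_mul, Equiv.Perm.mul_apply]
    rw [ha ((b.1 : Equiv.Perm V₁) v), hb v]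
  inv_mem' := by
    intro a ha v
    simp only [Prod.fst_inv, Prod.snd_inv, Subgroup.coe_inv]
    have h := ha ((a.1 : Equiv.Perm V₁)⁻¹ v)
    simp only [Equiv.Perm.coe_inv, Equiv.apply_symm_apply] at h ⊢
    rw [h, Equiv.symm_apply_apply]

/-- The automorphism group of a simple graph, as a subgroup of the permutations of the
vertex set. -/
def graphAut {V : Type*} (G : SimpleGraph V) : Subgroup (Equiv.Perm V) where
  carrier := {e | ∀ v w, G.Adj v w ↔ G.Adj (e v) (e w)}
  one_mem' := by intro v w; simp
  mul_mem' := by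
    intro a b ha hb v w
    simpa [Equiv.Perm.mul_apply] using (hb v w).trans (ha (b v) (b w))
  inv_mem' := by
    intro a ha v w
    simpa [Equiv.Perm.coe_inv, Equiv.apply_symm_apply] using (ha (a⁻¹ v) (a⁻¹ w)).symm

/-- The automorphism group of a graph homomorphism, i.e. the subgroup of
`Aut(Γ₁) × Aut(Γ₂)` of pairs commuting with `f`. -/
def graphArrowAut {V₁ V₂ : Type*} (Γ₁ : SimpleGraph V₁) (Γ₂ : SimpleGraph V₂)
    (f : V₁ → V₂) : Subgroup (graphAut Γ₁ × graphAut Γ₂) where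
  carrier := {p | ∀ v, f ((p.1 : Equiv.Perm V₁) v) = (p.2 : Equiv.Perm V₂) (f v)}
  one_mem' := by intro v; simp
  mul_mem' := by
    intro a b ha hb v
    simp only [Prod.fst_mul, Prod.snd_mul, Subgroup.coe_mul, Equiv.Perm.mul_apply]
    rw [ha ((b.1 : Equiv.Perm V₁) v), hb v]
  inv_mem' := by
    intro a ha v
    simp only [Prod.fst_inv, Prod.snd_inv, Subgroup.coe_inv]
    have h := ha ((a.1 : Equiv.Perm V₁)⁻¹ v)
    simp only [Equiv.Perm.coe_inv, Equiv.apply_symm_apply] at h ⊢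
    rw [h, Equiv.symm_apply_apply]

open Function

section MapSystems

variable {I V W : Type*}

def relOfMaps (f : I → V → V) : I → V → V → Prop := fun i v w => w = f i v

theorem mem_relAut_relOfMaps_iff {f : I → V → V} {e : Equiv.Perm V} :
    e ∈ relAut (relOfMaps f) ↔ ∀ i, Function.Commute e (f i) := by
  refine ⟨fun he i v => ((he i v (f i v)).mp rfl), fun he i v w => ?_⟩
  change w = f i v ↔ e w = f i (e v)
  rw [← he i v, e.injective.eq_iff]

theorem relOfMaps_hom_iff {f : I → V → V} {g : I → W → W} {φ : V → W} :
    (∀ i v w, relOfMaps f i v w → relOfMaps g i (φ v) (φ w)) ↔ ∀ i, Semiconj φ (f i) (g i) := by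
  refine ⟨fun h i v => h i v _ rfl, fun h i v w hvw => ?_⟩
  change w = f i v at hvw
  exact hvw ▸ h i v

end MapSystems

noncomputable def MonoidHom.mulEquivOfRangeEq {G P : Type*} [Group G] [Group P] {ρ : G →* P}
    (hρ : Injective ρ) {K : Subgroup P} (h : ρ.range = K) : G ≃* K :=
  (MonoidHom.ofInjective hρ).trans (MulEquiv.subgroupCongr h)

theorem nonempty_relArrowAut_mulEquiv {I V₁ V₂ G₁ G₂ : Type*} [Group G₁] [Group G₂]
    {R₁ : I → V₁ → V₁ → Prop} {R₂ : I → V₂ → V₂ → Prop} {φ : V₁ → V₂}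
    {ρ₁ : G₁ →* Equiv.Perm V₁} {ρ₂ : G₂ →* Equiv.Perm V₂} (hρ₁ : Injective ρ₁)
    (hρ₂ : Injective ρ₂) (h₁ : ρ₁.range = relAut R₁) (h₂ : ρ₂.range = relAut R₂)
    {H : Subgroup (G₁ × G₂)} (hH : ∀ a b, Semiconj φ (ρ₁ a) (ρ₂ b) ↔ (a, b) ∈ H) :
    Nonempty (relArrowAut R₁ R₂ φ ≃* H) := by
  let ψ := (MonoidHom.mulEquivOfRangeEq hρ₁ h₁).prodCongr (MonoidHom.mulEquivOfRangeEq hρ₂ h₂)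
  have hmap : H.map ψ.toMonoidHom = relArrowAut R₁ R₂ φ := by
    ext p
    obtain ⟨⟨a, b⟩, rfl⟩ := ψ.surjective p
    rw [Subgroup.mem_map_equiv, MulEquiv.symm_apply_apply, ← hH]
    rfl
  exact ⟨((H.equivMapOfInjective _ ψ.injective).trans (MulEquiv.subgroupCongr hmap)).symm⟩

universe u

namespace ArrowRealisation

inductive Label (G₁ G₂ : Type u)
  | left (g : G₁)
  | right (h : G₂)
  | link

variable {G₁ G₂ : Type u} [Group G₁]

def map₁ : Label G₁ G₂ → G₁ → G₁
  | .left g, v => v * g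
  | _, v => v

theorem commute_toPerm_map₁ (a : G₁) (i : Label G₁ G₂) :
    Function.Commute (MulAction.toPerm a : Equiv.Perm G₁) (map₁ i) := by
  intro v
  cases i <;> simp [map₁, mul_assoc]

theorem range_toPermHom_eq_relAut_map₁ :
    (MulAction.toPermHom G₁ G₁).range = relAut (relOfMaps (map₁ (G₂ := G₂))) := by
  ext e
  rw [mem_relAut_relOfMaps_iff]
  refine ⟨?_, fun he => ⟨e 1, Equiv.ext fun v => ?_⟩⟩
  · rintro ⟨a, rfl⟩
    exact commute_toPerm_map₁ a
  · simpa [map₁] using (he (.left v) 1).symm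

variable [Group G₂] (H : Subgroup (G₁ × G₂))

def map₂ : Label G₁ G₂ → G₂ ⊕ (G₁ × G₂) ⧸ H → G₂ ⊕ (G₁ × G₂) ⧸ H
  | .left g, .inr c => .inr (((g⁻¹, 1) : G₁ × G₂) • c)
  | .right h, .inl y => .inl (y * h)
  | .link, .inl y => .inr ((1, y) : G₁ × G₂)
  | _, x => x

def arrow (v : G₁) : G₂ ⊕ (G₁ × G₂) ⧸ H := .inr ((v⁻¹, 1) : G₁ × G₂)

def rep₂ : G₂ →* Equiv.Perm (G₂ ⊕ (G₁ × G₂) ⧸ H) :=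
  (Equiv.Perm.sumCongrHom _ _).comp ((MulAction.toPermHom G₂ G₂).prod
    ((MulAction.toPermHom (G₁ × G₂) _).comp (MonoidHom.inr G₁ G₂)))

@[simp] theorem rep₂_inl (b y : G₂) : rep₂ H b (.inl y) = .inl (b * y) := rfl

@[simp] theorem rep₂_inr (b : G₂) (c : (G₁ × G₂) ⧸ H) :
    rep₂ H b (.inr c) = .inr (((1, b) : G₁ × G₂) • c) :=
  rfl

theorem commute_rep₂_map₂ (b : G₂) (i : Label G₁ G₂) :
    Function.Commute (rep₂ H b) (map₂ H i) := by
  rintro (y | c) <;> cases i <;> simp [map₂, smul_smul, mul_assoc]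

theorem isFixedPt_map₂_link_iff {x : G₂ ⊕ (G₁ × G₂) ⧸ H} :
    IsFixedPt (map₂ H .link) x ↔ x.isRight := by
  rcases x with y | c <;> simp [IsFixedPt, map₂]

theorem exists_apply_inl_one_eq_inl {e : Equiv.Perm (G₂ ⊕ (G₁ × G₂) ⧸ H)}
    (he : e ∈ relAut (relOfMaps (map₂ H))) : ∃ b, e (.inl 1) = .inl b := by
  have hfix : ¬ IsFixedPt (map₂ H .link) (e (.inl 1)) := fun h => by
    simpa [isFixedPt_map₂_link_iff] using h.map (mem_relAut_relOfMaps_iff.mp (inv_mem he) .link)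
  rw [isFixedPt_map₂_link_iff, Bool.not_eq_true, Sum.isRight_eq_false, Sum.isLeft_iff] at hfix
  exact hfix

theorem range_rep₂_eq_relAut_map₂ : (rep₂ H).range = relAut (relOfMaps (map₂ H)) := by
  ext e
  refine ⟨fun ⟨b, hb⟩ => hb ▸ mem_relAut_relOfMaps_iff.mpr (commute_rep₂_map₂ H b), fun he => ?_⟩
  obtain ⟨b, hb⟩ := exists_apply_inl_one_eq_inl H he
  have he := mem_relAut_relOfMaps_iff.mp he
  have hb' := commute_rep₂_map₂ H b
  have hinl (y : G₂) : rep₂ H b (.inl y) = e (.inl y) := by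
    have : (.inl y : G₂ ⊕ (G₁ × G₂) ⧸ H) = map₂ H (.right y) (.inl 1) := by simp [map₂]
    rw [this, he, hb', hb, rep₂_inl, mul_one]
  refine ⟨b, Equiv.ext ?_⟩
  rintro (y | c)
  · exact hinl y
  induction c using QuotientGroup.induction_on with | H z => ?_
  have : (.inr z : G₂ ⊕ (G₁ × G₂) ⧸ H) = map₂ H (.left z.1⁻¹) (map₂ H .link (.inl z.2)) := by
    simp [map₂]
  rw [this, he, he, hb', hb', hinl]

theorem rep₂_injective : Injective (rep₂ H) := fun b b' h => by
  simpa using Equiv.congr_fun h (.inl 1)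

theorem semiconj_arrow_map (i : Label G₁ G₂) : Semiconj (arrow H) (map₁ i) (map₂ H i) := by
  intro v
  cases i <;> simp [arrow, map₁, map₂]

theorem semiconj_arrow_iff_mem (a : G₁) (b : G₂) :
    Semiconj (arrow H) (MulAction.toPermHom G₁ G₁ a) (rep₂ H b) ↔ (a, b) ∈ H := by
  simp [Semiconj, arrow, QuotientGroup.eq, mul_assoc]

end ArrowRealisation

/-- **Realisability in the arrow category of binary relational systems.**
For arbitrary groups `G₁`, `G₂` and any subgroup `H ≤ G₁ × G₂`, there exist a label set `I`,
binary relational systems `R₁`, `R₂` over `I` and a morphism `φ : R₁ → R₂` of `I`-systems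
with `Aut_I(R₁) ≅ G₁`, `Aut_I(R₂) ≅ G₂` and `Aut_I(φ) ≅ H`. -/
theorem arrow_realisability_in_relational_systems (G₁ G₂ : Type u) [Group G₁] [Group G₂]
    (H : Subgroup (G₁ × G₂)) :
    ∃ (I V₁ V₂ : Type u) (R₁ : I → V₁ → V₁ → Prop) (R₂ : I → V₂ → V₂ → Prop) (φ : V₁ → V₂),
      (∀ i v w, R₁ i v w → R₂ i (φ v) (φ w)) ∧
      Nonempty (relAut R₁ ≃* G₁) ∧ Nonempty (relAut R₂ ≃* G₂) ∧
      Nonempty (relArrowAut R₁ R₂ φ ≃* H) := by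
  open ArrowRealisation in
  exact ⟨Label G₁ G₂, G₁, G₂ ⊕ (G₁ × G₂) ⧸ H, relOfMaps map₁, relOfMaps (map₂ H), arrow H,
    relOfMaps_hom_iff.mpr (semiconj_arrow_map H),
    ⟨(MonoidHom.mulEquivOfRangeEq MulAction.toPerm_injective range_toPermHom_eq_relAut_map₁).symm⟩,
    ⟨(MonoidHom.mulEquivOfRangeEq (rep₂_injective H) (range_rep₂_eq_relAut_map₂ H)).symm⟩,
    nonempty_relArrowAut_mulEquiv MulAction.toPerm_injective (rep₂_injective H)
      range_toPermHom_eq_relAut_map₁ (range_rep₂_eq_relAut_map₂ H) (semiconj_arrow_iff_mem H)⟩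
end

section
/- Let φ' : S₁ → S₂ be a morphism of I-systems between two systems satisfying the replacement hypotheses (with the same family of graphs R_i). Then the map φ : Γ(S₁) → Γ(S₂) defined by φ(v) = φ'(v) for v ∈ V(S₁), φ(r_i^{(v,w)}) = r_i^{(φ'(v), φ'(w))}, and the identity of R_i on each copy R_i^{(v,w)} → R_i^{(φ'(v), φ'(w))}, is a graph homomorphism, and Aut(φ) is isomorphic to Aut_I(φ'): a pair of graph automorphisms of Γ(S₁) and Γ(S₂) commutes with φ if and only if the pair of their restrictions to V(S₁) and V(S₂) commutes with φ'. -/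
universe u

/-- The outdegree of a vertex in a binary relational system: the cardinality of the
disjoint union over the labels `i ∈ I` of the sets `{w | (v, w) ∈ R_i}`. -/
def relOutDeg {I V : Type u} (R : I → V → V → Prop) (v : V) : Cardinal.{u} :=
  Cardinal.mk (Σ i : I, {w : V // R i v w})

/-- The indegree of a vertex in a binary relational system: the cardinality of the
disjoint union over the labels `i ∈ I` of the sets `{w | (w, v) ∈ R_i}`. -/
def relInDeg {I V : Type u} (R : I → V → V → Prop) (v : V) : Cardinal.{u} :=
  Cardinal.mk (Σ i : I, {w : V // R i w v})

/-- The degree of a vertex in a binary relational system. -/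
def relDeg {I V : Type u} (R : I → V → V → Prop) (v : V) : Cardinal.{u} :=
  relOutDeg R v + relInDeg R v


section Replacement

variable {I V : Type u} (S : I → V → V → Prop)
variable (X : I → Type u) (Gr : ∀ i, SimpleGraph (X i)) (p : ∀ i, X i)

/-- The vertex set of the replacement graph `Γ(S)`: the vertices of `S` together with, for
each edge `(v, w)` of label `i`, a copy of the vertices of `R_i` (the `some x` vertices)
and an extra vertex `r_i^{(v,w)}` (the `none` vertex). -/
abbrev RepVert (X : I → Type u) := V ⊕ Σ i : I, {e : V × V // S i e.1 e.2} × Option (X i)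

/-- The adjacency relation of the replacement graph, consisting of: the edges of each copy
`R_i^{(v,w)}`, and the connecting edges `{v, r_i^{(v,w)}}`, `{r_i^{(v,w)}, p_i^{(v,w)}}` and
`{p_i^{(v,w)}, w}` for each edge `(v, w)` of label `i` of `S`. -/
inductive RepAdj : RepVert S X → RepVert S X → Prop
  | copy (i : I) (e : {e : V × V // S i e.1 e.2}) {x y : X i} :
      (Gr i).Adj x y → RepAdj (.inr ⟨i, e, some x⟩) (.inr ⟨i, e, some y⟩)
  | rp (i : I) (e : {e : V × V // S i e.1 e.2}) :
      RepAdj (.inr ⟨i, e, none⟩) (.inr ⟨i, e, some (p i)⟩)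
  | pr (i : I) (e : {e : V × V // S i e.1 e.2}) :
      RepAdj (.inr ⟨i, e, some (p i)⟩) (.inr ⟨i, e, none⟩)
  | vr (i : I) (e : {e : V × V // S i e.1 e.2}) :
      RepAdj (.inl e.val.1) (.inr ⟨i, e, none⟩)
  | rv (i : I) (e : {e : V × V // S i e.1 e.2}) :
      RepAdj (.inr ⟨i, e, none⟩) (.inl e.val.1)
  | pw (i : I) (e : {e : V × V // S i e.1 e.2}) :
      RepAdj (.inr ⟨i, e, some (p i)⟩) (.inl e.val.2)
  | wp (i : I) (e : {e : V × V // S i e.1 e.2}) :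
      RepAdj (.inl e.val.2) (.inr ⟨i, e, some (p i)⟩)

/-- The replacement graph `Γ(S)` obtained from the `I`-system `S` by the replacement
operation with the family of graphs `(R_i, p_i)`. -/
def repGraph : SimpleGraph (RepVert S X) where
  Adj := RepAdj S X Gr p
  symm := by
    constructor
    intro a b h
    cases h with
    | copy i e hxy => exact .copy i e ((Gr i).symm.symm _ _ hxy)
    | rp i e => exact .pr i e
    | pr i e => exact .rp i e
    | vr i e => exact .rv i e
    | rv i e => exact .vr i e
    | pw i e => exact .wp i e
    | wp i e => exact .pw i e
  loopless := by
    constructor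
    intro a h
    cases h with
    | copy i e hxy => exact (Gr i).loopless.irrefl _ hxy

end Replacement

/-- The graph homomorphism `Γ(S₁) → Γ(S₂)` induced by a morphism `φ'` of `I`-systems:
a vertex `v` of `S₁` goes to `φ'(v)`, the vertex `r_i^{(v,w)}` goes to
`r_i^{(φ'(v), φ'(w))}`, and each copy `R_i^{(v,w)}` maps identically onto
`R_i^{(φ'(v), φ'(w))}`. -/
def repMap {I V₁ V₂ : Type u} (S₁ : I → V₁ → V₁ → Prop) (S₂ : I → V₂ → V₂ → Prop)
    (X : I → Type u) (φ' : V₁ → V₂) (hφ : ∀ i v w, S₁ i v w → S₂ i (φ' v) (φ' w)) :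
    RepVert S₁ X → RepVert S₂ X
  | .inl v => .inl (φ' v)
  | .inr ⟨i, e, c⟩ => .inr ⟨i, ⟨(φ' e.val.1, φ' e.val.2), hφ i e.val.1 e.val.2 e.2⟩, c⟩

open Sum

section RepMap

variable {I V₁ V₂ V₃ : Type u} {S₁ : I → V₁ → V₁ → Prop} {S₂ : I → V₂ → V₂ → Prop}
  {S₃ : I → V₃ → V₃ → Prop} {X : I → Type u}

lemma repMap_adj {Gr : ∀ i, SimpleGraph (X i)} {p : ∀ i, X i} {f : V₁ → V₂}
    (hf : ∀ i v w, S₁ i v w → S₂ i (f v) (f w)) {a b : RepVert S₁ X}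
    (h : (repGraph S₁ X Gr p).Adj a b) :
    (repGraph S₂ X Gr p).Adj (repMap S₁ S₂ X f hf a) (repMap S₁ S₂ X f hf b) := by
  cases h with
  | copy i e hxy => exact .copy i _ hxy
  | rp i e => exact .rp i _
  | pr i e => exact .pr i _
  | vr i e => exact .vr i ⟨(f e.val.1, f e.val.2), hf i _ _ e.2⟩
  | rv i e => exact .rv i _
  | pw i e => exact .pw i _
  | wp i e => exact .wp i ⟨(f e.val.1, f e.val.2), hf i _ _ e.2⟩

lemma repMap_repMap {f : V₁ → V₂} (hf : ∀ i v w, S₁ i v w → S₂ i (f v) (f w))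
    {g : V₂ → V₃} (hg : ∀ i v w, S₂ i v w → S₃ i (g v) (g w)) (a : RepVert S₁ X) :
    repMap S₂ S₃ X g hg (repMap S₁ S₂ X f hf a) =
      repMap S₁ S₃ X (g ∘ f) (fun i v w h => hg i _ _ (hf i v w h)) a := by
  rcases a with v | ⟨i, e, c⟩ <;> rfl

lemma repMap_congr {f g : V₁ → V₂} (hf : ∀ i v w, S₁ i v w → S₂ i (f v) (f w))
    (hg : ∀ i v w, S₁ i v w → S₂ i (g v) (g w)) (hfg : ∀ v, f v = g v) (a : RepVert S₁ X) :
    repMap S₁ S₂ X f hf a = repMap S₁ S₂ X g hg a := by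
  obtain rfl : f = g := funext hfg
  rfl

lemma repMap_id (a : RepVert S₁ X) : repMap S₁ S₁ X id (fun _ _ _ h => h) a = a := by
  rcases a with v | ⟨i, e, c⟩ <;> rfl

lemma repMap_comm_iff {f : V₁ → V₂} (hf : ∀ i v w, S₁ i v w → S₂ i (f v) (f w))
    {σ₁ : V₁ → V₁} (hσ₁ : ∀ i v w, S₁ i v w → S₁ i (σ₁ v) (σ₁ w))
    {σ₂ : V₂ → V₂} (hσ₂ : ∀ i v w, S₂ i v w → S₂ i (σ₂ v) (σ₂ w)) :
    (∀ a : RepVert S₁ X, repMap S₁ S₂ X f hf (repMap S₁ S₁ X σ₁ hσ₁ a) =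
        repMap S₂ S₂ X σ₂ hσ₂ (repMap S₁ S₂ X f hf a)) ↔
      ∀ v, f (σ₁ v) = σ₂ (f v) := by
  simp only [repMap_repMap]
  exact ⟨fun h v => inl_injective (h (inl v)), fun h => repMap_congr _ _ h⟩

end RepMap

section Adjacency

variable {I V : Type u} {S : I → V → V → Prop} {X : I → Type u}
  {Gr : ∀ i, SimpleGraph (X i)} {p : ∀ i, X i}

lemma repGraph_adj_inl_iff {v : V} {b : RepVert S X} :
    (repGraph S X Gr p).Adj (inl v) b ↔
      (∃ i w, ∃ h : S i v w, b = inr ⟨i, ⟨(v, w), h⟩, none⟩) ∨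
      (∃ i u, ∃ h : S i u v, b = inr ⟨i, ⟨(u, v), h⟩, some (p i)⟩) := by
  constructor
  · rintro (_ | _ | _ | ⟨i, e⟩ | _ | _ | ⟨i, e⟩)
    · exact Or.inl ⟨i, e.val.2, e.2, rfl⟩
    · exact Or.inr ⟨i, e.val.1, e.2, rfl⟩
  · rintro (⟨i, w, h, rfl⟩ | ⟨i, u, h, rfl⟩)
    · exact .vr i ⟨(v, w), h⟩
    · exact .wp i ⟨(u, v), h⟩

lemma repGraph_adj_none_iff {i : I} {e : {e : V × V // S i e.1 e.2}} {b : RepVert S X} :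
    (repGraph S X Gr p).Adj (inr ⟨i, e, none⟩) b ↔
      b = inl e.val.1 ∨ b = inr ⟨i, e, some (p i)⟩ := by
  constructor
  · rintro (_ | _ | _ | _ | _ | _ | _)
    · exact Or.inr rfl
    · exact Or.inl rfl
  · rintro (rfl | rfl)
    · exact .rv i e
    · exact .rp i e

lemma repGraph_adj_some_iff {i : I} {e : {e : V × V // S i e.1 e.2}} {x : X i}
    {b : RepVert S X} :
    (repGraph S X Gr p).Adj (inr ⟨i, e, some x⟩) b ↔
      (∃ y, (Gr i).Adj x y ∧ b = inr ⟨i, e, some y⟩) ∨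
      (x = p i ∧ (b = inr ⟨i, e, none⟩ ∨ b = inl e.val.2)) := by
  constructor
  · rintro (⟨_, _, hxy⟩ | _ | _ | _ | _ | _ | _)
    · exact Or.inl ⟨_, hxy, rfl⟩
    · exact Or.inr ⟨rfl, Or.inl rfl⟩
    · exact Or.inr ⟨rfl, Or.inr rfl⟩
  · rintro (⟨y, hxy, rfl⟩ | ⟨rfl, rfl | rfl⟩)
    · exact .copy i e hxy
    · exact .pr i e
    · exact .pw i e

lemma repGraph_adj_some_some_iff {i : I} {e : {e : V × V // S i e.1 e.2}} {x y : X i} :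
    (repGraph S X Gr p).Adj (inr ⟨i, e, some x⟩) (inr ⟨i, e, some y⟩) ↔ (Gr i).Adj x y := by
  simp [repGraph_adj_some_iff]

end Adjacency

section Degree

variable {I V : Type u} {S : I → V → V → Prop} {X : I → Type u}
  {Gr : ∀ i, SimpleGraph (X i)} {p : ∀ i, X i}

open Cardinal

lemma card_neighborSet_inl (v : V) :
    #((repGraph S X Gr p).neighborSet (inl v)) = relDeg S v := by
  let out : (Σ i : I, {w : V // S i v w}) → RepVert S X :=
    fun q => inr ⟨q.1, ⟨(v, q.2.val), q.2.2⟩, none⟩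
  let into : (Σ i : I, {u : V // S i u v}) → RepVert S X :=
    fun q => inr ⟨q.1, ⟨(q.2.val, v), q.2.2⟩, some (p q.1)⟩
  have hN : (repGraph S X Gr p).neighborSet (inl v) = Set.range (Sum.elim out into) := by
    ext b
    simp only [SimpleGraph.mem_neighborSet, repGraph_adj_inl_iff, Set.mem_range, Sum.exists,
      Sum.elim_inl, Sum.elim_inr, Sigma.exists, Subtype.exists, out, into]
    grind
  have hinj : Function.Injective (Sum.elim out into) := by
    rintro (⟨i, w, h⟩ | ⟨i, w, h⟩) (⟨j, w', h'⟩ | ⟨j, w', h'⟩) hq <;>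
      simp only [Sum.elim_inl, Sum.elim_inr, out, into, inr.injEq, Sigma.mk.inj_iff] at hq <;>
      obtain ⟨rfl, hq⟩ := hq <;> simp at hq
    all_goals subst hq; rfl
  rw [hN, mk_range_eq _ hinj, ← add_def]
  rfl

lemma card_neighborSet_none {i : I} (e : {e : V × V // S i e.1 e.2}) :
    #((repGraph S X Gr p).neighborSet (inr ⟨i, e, none⟩)) = 2 := by
  have hN : (repGraph S X Gr p).neighborSet (inr ⟨i, e, none⟩) =
      {inl e.val.1, inr ⟨i, e, some (p i)⟩} := Set.ext fun b => repGraph_adj_none_iff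
  rw [hN, mk_insert (by simp), mk_singleton, one_add_one_eq_two]

lemma neighborSet_some {i : I} (e : {e : V × V // S i e.1 e.2}) (x : X i) :
    (repGraph S X Gr p).neighborSet (inr ⟨i, e, some x⟩) =
      (fun y => inr ⟨i, e, some y⟩) '' (Gr i).neighborSet x ∪
        {b | x = p i ∧ (b = inr ⟨i, e, none⟩ ∨ b = inl e.val.2)} := by
  ext b
  simp [repGraph_adj_some_iff, eq_comm]

lemma copy_injective {i : I} (e : {e : V × V // S i e.1 e.2}) :
    Function.Injective fun y : X i => (inr ⟨i, e, some y⟩ : RepVert S X) := by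
  intro y z h
  simpa using h

lemma card_neighborSet_some_of_ne {i : I} (e : {e : V × V // S i e.1 e.2}) {x : X i}
    (hx : x ≠ p i) :
    #((repGraph S X Gr p).neighborSet (inr ⟨i, e, some x⟩)) = #((Gr i).neighborSet x) := by
  simp only [neighborSet_some, hx, false_and, Set.ofPred_false, Set.union_empty]
  exact mk_image_eq (copy_injective e)

lemma card_neighborSet_some_base {i : I} (e : {e : V × V // S i e.1 e.2})
    (hp : #((Gr i).neighborSet (p i)) = 1) :
    #((repGraph S X Gr p).neighborSet (inr ⟨i, e, some (p i)⟩)) = 3 := by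
  have hpair : {b : RepVert S X | p i = p i ∧ (b = inr ⟨i, e, none⟩ ∨ b = inl e.val.2)} =
      {inr ⟨i, e, none⟩, inl e.val.2} := by
    ext b
    simp
  have hdisj : Disjoint ((fun y => inr ⟨i, e, some y⟩) '' (Gr i).neighborSet (p i))
      ({inr ⟨i, e, none⟩, inl e.val.2} : Set (RepVert S X)) := by
    simp [Set.disjoint_left]
  rw [neighborSet_some, hpair, mk_union_of_disjoint hdisj, mk_image_eq (copy_injective e), hp,
    mk_insert (by simp), mk_singleton]
  norm_num

lemma card_neighborSet_apply {W : Type*} {G : SimpleGraph W} {ψ : Equiv.Perm W}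
    (hψ : ψ ∈ graphAut G) (a : W) : #(G.neighborSet (ψ a)) = #(G.neighborSet a) :=
  (mk_congr (ψ.subtypeEquiv fun b => hψ a b)).symm

end Degree

inductive RepKind
  | base
  | connector
  | copy

def repKind {I V : Type u} {S : I → V → V → Prop} {X : I → Type u} : RepVert S X → RepKind
  | .inl _ => .base
  | .inr ⟨_, _, none⟩ => .connector
  | .inr ⟨_, _, some _⟩ => .copy

section Kind

variable {I V : Type u} {S : I → V → V → Prop} {X : I → Type u}
  {Gr : ∀ i, SimpleGraph (X i)} {p : ∀ i, X i} {α : Cardinal.{u}}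

open Cardinal

lemma repKind_eq_base_iff (hp : ∀ i, #((Gr i).neighborSet (p i)) = 1)
    (hbig : ∀ (i : I) (x : X i), x ≠ p i → α < #((Gr i).neighborSet x))
    (hdeg : ∀ v : V, 4 ≤ relDeg S v ∧ relDeg S v ≤ α) (a : RepVert S X) :
    repKind a = .base ↔
      4 ≤ #((repGraph S X Gr p).neighborSet a) ∧ #((repGraph S X Gr p).neighborSet a) ≤ α := by
  rcases a with v | ⟨i, e, _ | x⟩
  · simpa [repKind, card_neighborSet_inl] using hdeg v
  · simp only [repKind, reduceCtorEq, card_neighborSet_none, false_iff]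
    norm_num
  · by_cases hx : x = p i
    · subst hx
      simp only [repKind, reduceCtorEq, card_neighborSet_some_base e (hp i), false_iff]
      norm_num
    · simp [repKind, card_neighborSet_some_of_ne e hx, hbig i x hx]

lemma repKind_eq_connector_iff (hp : ∀ i, #((Gr i).neighborSet (p i)) = 1)
    (hbig : ∀ (i : I) (x : X i), x ≠ p i → α < #((Gr i).neighborSet x))
    (hdeg : ∀ v : V, 4 ≤ relDeg S v ∧ relDeg S v ≤ α) (a : RepVert S X) :
    repKind a = .connector ↔ #((repGraph S X Gr p).neighborSet a) = 2 := by
  rcases a with v | ⟨i, e, _ | x⟩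
  · simp only [repKind, reduceCtorEq, card_neighborSet_inl, false_iff]
    exact fun h => absurd (h ▸ (hdeg v).1) (by norm_num)
  · simp [repKind, card_neighborSet_none]
  · by_cases hx : x = p i
    · subst hx
      simp [repKind, card_neighborSet_some_base e (hp i)]
    · simp only [repKind, reduceCtorEq, card_neighborSet_some_of_ne e hx, false_iff]
      have hα : 4 ≤ α := (hdeg e.val.1).1.trans (hdeg e.val.1).2
      exact fun h => absurd (h ▸ hbig i x hx) (not_lt.mpr (le_trans (by norm_num) hα))

lemma repKind_apply (hp : ∀ i, #((Gr i).neighborSet (p i)) = 1)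
    (hbig : ∀ (i : I) (x : X i), x ≠ p i → α < #((Gr i).neighborSet x))
    (hdeg : ∀ v : V, 4 ≤ relDeg S v ∧ relDeg S v ≤ α)
    {ψ : Equiv.Perm (RepVert S X)} (hψ : ψ ∈ graphAut (repGraph S X Gr p)) (a : RepVert S X) :
    repKind (ψ a) = repKind a := by
  have hbase := repKind_eq_base_iff hp hbig hdeg (ψ a)
  have hconn := repKind_eq_connector_iff hp hbig hdeg (ψ a)
  rw [card_neighborSet_apply hψ, ← repKind_eq_base_iff hp hbig hdeg] at hbase
  rw [card_neighborSet_apply hψ, ← repKind_eq_connector_iff hp hbig hdeg] at hconn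
  cases h : repKind a <;> cases h' : repKind (ψ a) <;> simp_all

end Kind

section Automorphism

variable {I V : Type u} {S : I → V → V → Prop} {X : I → Type u}
  {Gr : ∀ i, SimpleGraph (X i)} {p : ∀ i, X i}
  {ψ : Equiv.Perm (RepVert S X)}

lemma exists_apply_connector (hψ : ψ ∈ graphAut (repGraph S X Gr p))
    (hkind : ∀ a, repKind (ψ a) = repKind a) {σ : V → V} (hσ : ∀ v, ψ (inl v) = inl (σ v))
    (i : I) (e : {e : V × V // S i e.1 e.2}) :
    ∃ j, ∃ f : {e : V × V // S j e.1 e.2}, f.val = (σ e.val.1, σ e.val.2) ∧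
      ψ (inr ⟨i, e, none⟩) = inr ⟨j, f, none⟩ ∧
      ψ (inr ⟨i, e, some (p i)⟩) = inr ⟨j, f, some (p j)⟩ := by
  have hr := hkind (inr ⟨i, e, none⟩)
  rcases hψr : ψ (inr ⟨i, e, none⟩) with v | ⟨j, f, _ | y⟩ <;>
    simp only [hψr, repKind, reduceCtorEq] at hr
  have h₁ := (hψ _ _).mp (.rv i e)
  rw [hψr, hσ, repGraph_adj_none_iff] at h₁
  have h₂ := (hψ _ _).mp (.rp i e)
  rw [hψr, repGraph_adj_none_iff] at h₂
  rcases h₂ with h₂ | h₂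
  · exact absurd (hkind (inr ⟨i, e, some (p i)⟩)) (by simp [h₂, repKind])
  have h₃ := (hψ _ _).mp (.pw i e)
  rw [h₂, hσ, repGraph_adj_some_iff] at h₃
  simp only [inl.injEq, reduceCtorEq, and_false, exists_false, true_and, false_or, or_false] at h₁ h₃
  exact ⟨j, f, Prod.ext h₁.symm h₃.symm, rfl, h₂⟩

lemma exists_apply_some_of_apply_base {i j : I} (hconn : (Gr i).Preconnected)
    (hψ : ψ ∈ graphAut (repGraph S X Gr p)) (hkind : ∀ a, repKind (ψ a) = repKind a)
    {e : {e : V × V // S i e.1 e.2}} {f : {e : V × V // S j e.1 e.2}}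
    (hbase : ψ (inr ⟨i, e, some (p i)⟩) = inr ⟨j, f, some (p j)⟩) (x : X i) :
    ∃ y, ψ (inr ⟨i, e, some x⟩) = inr ⟨j, f, some y⟩ := by
  suffices h : ∀ u x, (Gr i).Walk u x → (∃ y, ψ (inr ⟨i, e, some u⟩) = inr ⟨j, f, some y⟩) →
      ∃ y, ψ (inr ⟨i, e, some x⟩) = inr ⟨j, f, some y⟩ from
    h _ _ (hconn (p i) x).some ⟨p j, hbase⟩
  intro u x w
  induction w with
  | nil => exact id
  | @cons _ b _ hub _ ih =>
    rintro ⟨y, hy⟩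
    have hadj := (hψ _ _).mp (.copy i e hub)
    rw [hy, repGraph_adj_some_iff] at hadj
    rcases hadj with ⟨z, -, hz⟩ | ⟨-, hz | hz⟩
    · exact ih ⟨z, hz⟩
    all_goals exact absurd (hkind (inr ⟨i, e, some b⟩)) (by simp [hz, repKind])

lemma exists_iso_of_apply_base {i j : I} (hconn : ∀ i, (Gr i).Preconnected)
    (hψ : ψ ∈ graphAut (repGraph S X Gr p)) (hkind : ∀ a, repKind (ψ a) = repKind a)
    {e : {e : V × V // S i e.1 e.2}} {f : {e : V × V // S j e.1 e.2}}
    (hbase : ψ (inr ⟨i, e, some (p i)⟩) = inr ⟨j, f, some (p j)⟩) :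
    ∃ φ : Gr i ≃g Gr j, ∀ x, ψ (inr ⟨i, e, some x⟩) = inr ⟨j, f, some (φ x)⟩ := by
  have hkind' : ∀ a, repKind (ψ⁻¹ a) = repKind a := fun a => by
    simpa using (hkind (ψ⁻¹ a)).symm
  have hbase' : ψ⁻¹ (inr ⟨j, f, some (p j)⟩) = inr ⟨i, e, some (p i)⟩ := by
    simp [← hbase]
  choose fwd hfwd using exists_apply_some_of_apply_base (hconn i) hψ hkind hbase
  choose bwd hbwd using
    exists_apply_some_of_apply_base (hconn j) (inv_mem hψ) hkind' hbase'
  have left_inv : ∀ x, bwd (fwd x) = x := fun x => by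
    simpa [← hfwd] using (hbwd (fwd x)).symm
  have right_inv : ∀ y, fwd (bwd y) = y := fun y => by
    simpa [← hbwd] using (hfwd (bwd y)).symm
  refine ⟨⟨⟨fwd, bwd, left_inv, right_inv⟩, fun {x y} => ?_⟩, hfwd⟩
  rw [← repGraph_adj_some_some_iff (e := f), Equiv.coe_fn_mk, ← hfwd, ← hfwd, ← hψ,
    repGraph_adj_some_some_iff]

lemma exists_forall_apply_eq_repMap (hconn : ∀ i, (Gr i).Preconnected)
    (hrigid : ∀ (i : I) (φ : Gr i ≃g Gr i) (x : X i), φ x = x)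
    (hdist : ∀ i j : I, i ≠ j → IsEmpty (Gr i ≃g Gr j))
    (hψ : ψ ∈ graphAut (repGraph S X Gr p)) (hkind : ∀ a, repKind (ψ a) = repKind a)
    {σ : V → V} (hσ : ∀ v, ψ (inl v) = inl (σ v)) :
    ∃ hσS : ∀ i v w, S i v w → S i (σ v) (σ w), ∀ a, ψ a = repMap S S X σ hσS a := by
  have key : ∀ i (e : {e : V × V // S i e.1 e.2}), ∃ hs : S i (σ e.val.1) (σ e.val.2),
      ∀ c, ψ (inr ⟨i, e, c⟩) = inr ⟨i, ⟨(σ e.val.1, σ e.val.2), hs⟩, c⟩ := by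
    intro i e
    obtain ⟨j, ⟨⟨a, b⟩, hab⟩, hf, hnone, hbase⟩ := exists_apply_connector hψ hkind hσ i e
    obtain ⟨φ, hφ⟩ := exists_iso_of_apply_base hconn hψ hkind hbase
    obtain rfl : i = j := by
      by_contra hij
      exact (hdist i j hij).false φ
    obtain ⟨rfl, rfl⟩ := Prod.mk.inj hf
    refine ⟨hab, ?_⟩
    rintro (_ | x)
    · exact hnone
    · rw [hφ, hrigid]
  refine ⟨fun i v w h => (key i ⟨(v, w), h⟩).1, ?_⟩
  rintro (v | ⟨i, e, c⟩)
  · exact hσ v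
  · exact (key i e).2 c

lemma exists_perm_apply_inl (hkind : ∀ a, repKind (ψ a) = repKind a) :
    ∃ σ : Equiv.Perm V, ∀ v, ψ (inl v) = inl (σ v) := by
  have hinl : ∀ (φ : Equiv.Perm (RepVert S X)), (∀ a, repKind (φ a) = repKind a) →
      ∀ v, ∃ w, φ (inl v) = inl w := by
    intro φ hφ v
    have h := hφ (inl v)
    rcases hv : φ (inl v) with w | ⟨i, e, _ | x⟩ <;> simp_all [repKind]
  choose s hs using hinl ψ hkind
  choose t ht using hinl ψ⁻¹ fun a => by simpa using (hkind (ψ⁻¹ a)).symm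
  refine ⟨⟨s, t, fun v => ?_, fun v => ?_⟩, hs⟩
  · simpa [← hs] using (ht (s v)).symm
  · simpa [← ht] using (hs (t v)).symm

end Automorphism

lemma mem_graphAut_of_adj {W : Type*} {G : SimpleGraph W} {ψ : Equiv.Perm W}
    (h : ∀ a b, G.Adj a b → G.Adj (ψ a) (ψ b)) (h' : ∀ a b, G.Adj a b → G.Adj (ψ⁻¹ a) (ψ⁻¹ b)) :
    ψ ∈ graphAut G :=
  fun a b => ⟨h a b, fun hab => by simpa using h' _ _ hab⟩

lemma relAut.map_rel {I V : Type*} {S : I → V → V → Prop} (σ : relAut S) (i : I) (v w : V)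
    (h : S i v w) : S i ((σ : Equiv.Perm V) v) ((σ : Equiv.Perm V) w) :=
  (σ.2 i v w).mp h

section Lift

variable {I V : Type u} {S : I → V → V → Prop} {X : I → Type u}

def repPerm (σ : relAut S) : Equiv.Perm (RepVert S X) where
  toFun := repMap S S X σ (relAut.map_rel σ)
  invFun := repMap S S X (σ⁻¹ : relAut S) (relAut.map_rel σ⁻¹)
  left_inv a := by
    rw [repMap_repMap]
    exact (repMap_congr _ _ (by simp) a).trans (repMap_id a)
  right_inv a := by
    rw [repMap_repMap]
    exact (repMap_congr _ _ (by simp) a).trans (repMap_id a)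

variable (S X) (Gr : ∀ i, SimpleGraph (X i)) (p : ∀ i, X i)

def repAutHom : relAut S →* graphAut (repGraph S X Gr p) where
  toFun σ := ⟨repPerm σ, mem_graphAut_of_adj (fun _ _ => repMap_adj (relAut.map_rel σ))
    (fun _ _ => repMap_adj (relAut.map_rel σ⁻¹))⟩
  map_one' := by
    ext a
    exact repMap_id a
  map_mul' σ τ := by
    ext a
    exact (repMap_repMap (relAut.map_rel τ) (relAut.map_rel σ) a).symm

lemma repAutHom_apply (σ : relAut S) (a : RepVert S X) :
    ((repAutHom S X Gr p σ : graphAut (repGraph S X Gr p)) : Equiv.Perm (RepVert S X)) a =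
      repMap S S X σ (relAut.map_rel σ) a :=
  rfl

lemma repAutHom_injective : Function.Injective (repAutHom S X Gr p) := by
  intro σ τ h
  ext v
  simpa [repAutHom_apply, repMap] using
    congrArg (fun ψ : graphAut (repGraph S X Gr p) => (ψ : Equiv.Perm (RepVert S X)) (inl v)) h

variable {S X Gr p} {α : Cardinal.{u}}

lemma eq_repAutHom (hconn : ∀ i, (Gr i).Preconnected)
    (hp : ∀ i, Cardinal.mk ((Gr i).neighborSet (p i)) = 1)
    (hbig : ∀ (i : I) (x : X i), x ≠ p i → α < Cardinal.mk ((Gr i).neighborSet x))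
    (hrigid : ∀ (i : I) (φ : Gr i ≃g Gr i) (x : X i), φ x = x)
    (hdist : ∀ i j : I, i ≠ j → IsEmpty (Gr i ≃g Gr j))
    (hdeg : ∀ v : V, 4 ≤ relDeg S v ∧ relDeg S v ≤ α)
    (ψ : graphAut (repGraph S X Gr p)) (σ : relAut S)
    (hσ : ∀ v, (ψ : Equiv.Perm (RepVert S X)) (inl v) = inl ((σ : Equiv.Perm V) v)) :
    ψ = repAutHom S X Gr p σ := by
  obtain ⟨_, h⟩ := exists_forall_apply_eq_repMap hconn hrigid hdist ψ.2
    (repKind_apply hp hbig hdeg ψ.2) hσ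
  exact Subtype.ext (Equiv.ext h)

lemma repAutHom_surjective (hconn : ∀ i, (Gr i).Preconnected)
    (hp : ∀ i, Cardinal.mk ((Gr i).neighborSet (p i)) = 1)
    (hbig : ∀ (i : I) (x : X i), x ≠ p i → α < Cardinal.mk ((Gr i).neighborSet x))
    (hrigid : ∀ (i : I) (φ : Gr i ≃g Gr i) (x : X i), φ x = x)
    (hdist : ∀ i j : I, i ≠ j → IsEmpty (Gr i ≃g Gr j))
    (hdeg : ∀ v : V, 4 ≤ relDeg S v ∧ relDeg S v ≤ α) :
    Function.Surjective (repAutHom S X Gr p) := by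
  intro ψ
  have hkind := repKind_apply hp hbig hdeg ψ.2
  obtain ⟨σ, hσ⟩ := exists_perm_apply_inl hkind
  have hσinv : ∀ v, (ψ : Equiv.Perm (RepVert S X))⁻¹ (inl v) = inl (σ⁻¹ v) := fun v => by
    simpa using congrArg (⇑(ψ : Equiv.Perm (RepVert S X))⁻¹) (hσ (σ⁻¹ v)).symm
  obtain ⟨hmap, -⟩ := exists_forall_apply_eq_repMap hconn hrigid hdist ψ.2 hkind hσ
  obtain ⟨hmap', -⟩ := exists_forall_apply_eq_repMap hconn hrigid hdist (inv_mem ψ.2)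
    (repKind_apply hp hbig hdeg (inv_mem ψ.2)) hσinv
  have hσS : σ ∈ relAut S := fun i v w => ⟨hmap i v w, fun h => by simpa using hmap' i _ _ h⟩
  exact ⟨⟨σ, hσS⟩, (eq_repAutHom hconn hp hbig hrigid hdist hdeg ψ ⟨σ, hσS⟩ hσ).symm⟩

end Lift

lemma comap_graphArrowAut_prodMap {I V₁ V₂ : Type u} {S₁ : I → V₁ → V₁ → Prop}
    {S₂ : I → V₂ → V₂ → Prop} {X : I → Type u} {Gr : ∀ i, SimpleGraph (X i)} {p : ∀ i, X i}
    {φ' : V₁ → V₂} (hφ : ∀ i v w, S₁ i v w → S₂ i (φ' v) (φ' w)) :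
    (graphArrowAut (repGraph S₁ X Gr p) (repGraph S₂ X Gr p) (repMap S₁ S₂ X φ' hφ)).comap
        ((repAutHom S₁ X Gr p).prodMap (repAutHom S₂ X Gr p)) = relArrowAut S₁ S₂ φ' := by
  ext ⟨σ₁, σ₂⟩
  exact repMap_comm_iff hφ (relAut.map_rel σ₁) (relAut.map_rel σ₂)

theorem replacement_arrow_automorphisms_general {I V₁ V₂ : Type u}
    (S₁ : I → V₁ → V₁ → Prop) (S₂ : I → V₂ → V₂ → Prop)
    (X : I → Type u) (Gr : ∀ i, SimpleGraph (X i)) (p : ∀ i, X i)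
    (α : Cardinal.{u})
    (hconn : ∀ i, (Gr i).Connected)
    (hp : ∀ i, Cardinal.mk ((Gr i).neighborSet (p i)) = 1)
    (hbig : ∀ (i : I) (x : X i), x ≠ p i → α < Cardinal.mk ((Gr i).neighborSet x))
    (hrigid : ∀ (i : I) (φ : Gr i ≃g Gr i) (x : X i), φ x = x)
    (hdist : ∀ i j : I, i ≠ j → IsEmpty (Gr i ≃g Gr j))
    (hdeg₁ : ∀ v : V₁, 4 ≤ relDeg S₁ v ∧ relDeg S₁ v ≤ α)
    (hdeg₂ : ∀ v : V₂, 4 ≤ relDeg S₂ v ∧ relDeg S₂ v ≤ α)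
    (φ' : V₁ → V₂) (hφ : ∀ i v w, S₁ i v w → S₂ i (φ' v) (φ' w)) :
    (∀ a b : RepVert S₁ X, (repGraph S₁ X Gr p).Adj a b →
        (repGraph S₂ X Gr p).Adj (repMap S₁ S₂ X φ' hφ a) (repMap S₁ S₂ X φ' hφ b)) ∧
    (∀ (ψ₁ : graphAut (repGraph S₁ X Gr p)) (ψ₂ : graphAut (repGraph S₂ X Gr p))
        (σ₁ : relAut S₁) (σ₂ : relAut S₂),
      (∀ v : V₁, (ψ₁ : Equiv.Perm (RepVert S₁ X)) (Sum.inl v)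
          = Sum.inl ((σ₁ : Equiv.Perm V₁) v)) →
      (∀ v : V₂, (ψ₂ : Equiv.Perm (RepVert S₂ X)) (Sum.inl v)
          = Sum.inl ((σ₂ : Equiv.Perm V₂) v)) →
      ((∀ a : RepVert S₁ X,
          repMap S₁ S₂ X φ' hφ ((ψ₁ : Equiv.Perm (RepVert S₁ X)) a)
            = (ψ₂ : Equiv.Perm (RepVert S₂ X)) (repMap S₁ S₂ X φ' hφ a)) ↔
        ∀ v : V₁, φ' ((σ₁ : Equiv.Perm V₁) v) = (σ₂ : Equiv.Perm V₂) (φ' v))) ∧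
    Nonempty (graphArrowAut (repGraph S₁ X Gr p) (repGraph S₂ X Gr p)
        (repMap S₁ S₂ X φ' hφ) ≃* relArrowAut S₁ S₂ φ') := by
  have hpre : ∀ i, (Gr i).Preconnected := fun i => (hconn i).preconnected
  refine ⟨fun a b => repMap_adj hφ, ?_, ?_⟩
  · intro ψ₁ ψ₂ σ₁ σ₂ h₁ h₂
    obtain rfl := eq_repAutHom hpre hp hbig hrigid hdist hdeg₁ ψ₁ σ₁ h₁
    obtain rfl := eq_repAutHom hpre hp hbig hrigid hdist hdeg₂ ψ₂ σ₂ h₂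
    exact repMap_comm_iff hφ (relAut.map_rel σ₁) (relAut.map_rel σ₂)
  · let f := (repAutHom S₁ X Gr p).prodMap (repAutHom S₂ X Gr p)
    have hinj : Function.Injective f :=
      (repAutHom_injective S₁ X Gr p).prodMap (repAutHom_injective S₂ X Gr p)
    have hsurj : Function.Surjective f :=
      (repAutHom_surjective hpre hp hbig hrigid hdist hdeg₁).prodMap
        (repAutHom_surjective hpre hp hbig hrigid hdist hdeg₂)
    have hmap : (relArrowAut S₁ S₂ φ').map f =
        graphArrowAut (repGraph S₁ X Gr p) (repGraph S₂ X Gr p) (repMap S₁ S₂ X φ' hφ) := by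
      rw [← comap_graphArrowAut_prodMap hφ, Subgroup.map_comap_eq_self_of_surjective hsurj]
    exact ⟨(((relArrowAut S₁ S₂ φ').equivMapOfInjective f hinj).trans
      (MulEquiv.subgroupCongr hmap)).symm⟩

/-- **Replacement for morphisms.** For a morphism `φ' : S₁ → S₂` of `I`-systems satisfying
the replacement hypotheses, the induced map `φ : Γ(S₁) → Γ(S₂)` is a graph homomorphism;
a pair of graph automorphisms of `Γ(S₁)` and `Γ(S₂)` commutes with `φ` if and only if the
pair of their restrictions to `V(S₁)` and `V(S₂)` commutes with `φ'`, and
`Aut(φ) ≅ Aut_I(φ')`. -/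
theorem replacement_arrow_automorphisms {I V₁ V₂ : Type u}
    (S₁ : I → V₁ → V₁ → Prop) (S₂ : I → V₂ → V₂ → Prop)
    (X : I → Type u) (Gr : ∀ i, SimpleGraph (X i)) (p : ∀ i, X i)
    (α : Cardinal.{u}) (hα : 4 ≤ α)
    (hconn : ∀ i, (Gr i).Connected)
    (hp : ∀ i, Cardinal.mk ((Gr i).neighborSet (p i)) = 1)
    (hbig : ∀ (i : I) (x : X i), x ≠ p i → α < Cardinal.mk ((Gr i).neighborSet x))
    (hrigid : ∀ (i : I) (φ : Gr i ≃g Gr i) (x : X i), φ x = x)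
    (hdist : ∀ i j : I, i ≠ j → IsEmpty (Gr i ≃g Gr j))
    (hdeg₁ : ∀ v : V₁, 4 ≤ relDeg S₁ v ∧ relDeg S₁ v ≤ α)
    (hdeg₂ : ∀ v : V₂, 4 ≤ relDeg S₂ v ∧ relDeg S₂ v ≤ α)
    (φ' : V₁ → V₂) (hφ : ∀ i v w, S₁ i v w → S₂ i (φ' v) (φ' w)) :
    (∀ a b : RepVert S₁ X, (repGraph S₁ X Gr p).Adj a b →
        (repGraph S₂ X Gr p).Adj (repMap S₁ S₂ X φ' hφ a) (repMap S₁ S₂ X φ' hφ b)) ∧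
    (∀ (ψ₁ : graphAut (repGraph S₁ X Gr p)) (ψ₂ : graphAut (repGraph S₂ X Gr p))
        (σ₁ : relAut S₁) (σ₂ : relAut S₂),
      (∀ v : V₁, (ψ₁ : Equiv.Perm (RepVert S₁ X)) (Sum.inl v)
          = Sum.inl ((σ₁ : Equiv.Perm V₁) v)) →
      (∀ v : V₂, (ψ₂ : Equiv.Perm (RepVert S₂ X)) (Sum.inl v)
          = Sum.inl ((σ₂ : Equiv.Perm V₂) v)) →
      ((∀ a : RepVert S₁ X,
          repMap S₁ S₂ X φ' hφ ((ψ₁ : Equiv.Perm (RepVert S₁ X)) a)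
            = (ψ₂ : Equiv.Perm (RepVert S₂ X)) (repMap S₁ S₂ X φ' hφ a)) ↔
        ∀ v : V₁, φ' ((σ₁ : Equiv.Perm V₁) v) = (σ₂ : Equiv.Perm V₂) (φ' v))) ∧
    Nonempty (graphArrowAut (repGraph S₁ X Gr p) (repGraph S₂ X Gr p)
        (repMap S₁ S₂ X φ' hφ) ≃* relArrowAut S₁ S₂ φ') :=
  replacement_arrow_automorphisms_general S₁ S₂ X Gr p α hconn hp hbig hrigid hdist hdeg₁ hdeg₂ φ'
    hφ
end
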